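/- Let g and h be Leibniz algebras and let l : g → gl(h), r : g → gl(h), ω : g⊗g → h be linear maps. The bracket on g ⊕ h defined by [x+α, y+β] = [x,y]_g + ω(x,y) + l_x β + r_y α + [α,β]_h satisfies the Leibniz identity if and only if the following hold for all x,y,z ∈ g and α,β ∈ h: (1) l_x is a left derivation of h; (2) r_x is a right derivation of h; (3) [l_x α + r_x α, β]_h = 0; (4) [l_x,l_y] − l_{[x,y]_g} = ad^L_{ω(x,y)}; (5) [l_x,r_y] − r_{[x,y]_g} = ad^R_{ω(x,y)}; (6) r_y(r_x α + l_x α) = 0; (7) l_x ω(y,z) − l_y ω(x,z) − r_z ω(x,y) = ω([x,y]_g, z) − ω(x,[y,z]_g) + ω(y,[x,z]_g). -/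

import Mathlib

/-!
The Leibnizator `J(u, v, w) = [u,[v,w]] - [[u,v],w] - [v,[u,w]]` of the extension bracket is
additive in each argument, so it vanishes as soon as it vanishes on triples whose entries each
lie in `g` or in `h`. Its `g`-component is the Leibnizator of `g`. On the eight such triples its
`h`-component is the Leibnizator of `h` or the defect of one of the conditions (1), (2), (4),
(5), (7), except on `(α, x, β)` and `(α, x, y)`, where modulo (1) and (5) it is the defect of
(3) and (6).
-/

variable {K : Type*} [Field K]
  {g : Type*} [AddCommGroup g] [Module K g]
  {h : Type*} [AddCommGroup h] [Module K h]

/-- The extension bracket on `g ⊕ h` determined by `(l, r, ω)`: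
`[x+α, y+β] = [x,y]_g + ω(x,y) + l_x β + r_y α + [α,β]_h`. -/
def extBracket (Bg : g →ₗ[K] g →ₗ[K] g) (Bh : h →ₗ[K] h →ₗ[K] h)
    (l r : g →ₗ[K] Module.End K h) (ω : g →ₗ[K] g →ₗ[K] h)
    (u v : g × h) : g × h :=
  (Bg u.1 v.1, ω u.1 v.1 + l u.1 v.2 + r v.1 u.2 + Bh u.2 v.2)

def leibnizator {M : Type*} [AddCommGroup M] (B : M → M → M) (u v w : M) : M :=
  B u (B v w) - B (B u v) w - B v (B u w)

theorem leibnizator_eq_zero_iff {M : Type*} [AddCommGroup M] {B : M → M → M} {u v w : M} :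
    leibnizator B u v w = 0 ↔ B u (B v w) = B (B u v) w + B v (B u w) := by
  rw [leibnizator, sub_sub, sub_eq_zero]

section ExtBracket

variable {Bg : g →ₗ[K] g →ₗ[K] g} {Bh : h →ₗ[K] h →ₗ[K] h}
  {l r : g →ₗ[K] Module.End K h} {ω : g →ₗ[K] g →ₗ[K] h}

theorem fst_leibnizator_extBracket (u v w : g × h) :
    (leibnizator (extBracket Bg Bh l r ω) u v w).1 = leibnizator (Bg · ·) u.1 v.1 w.1 :=
  rfl

theorem snd_leibnizator_extBracket_eq_sum (x y z : g) (α β γ : h) :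
    (leibnizator (extBracket Bg Bh l r ω) (x, α) (y, β) (z, γ)).2 =
      (leibnizator (extBracket Bg Bh l r ω) (x, 0) (y, 0) (z, 0)).2 +
      (leibnizator (extBracket Bg Bh l r ω) (x, 0) (y, 0) (0, γ)).2 +
      (leibnizator (extBracket Bg Bh l r ω) (x, 0) (0, β) (z, 0)).2 +
      (leibnizator (extBracket Bg Bh l r ω) (0, α) (y, 0) (z, 0)).2 +
      (leibnizator (extBracket Bg Bh l r ω) (x, 0) (0, β) (0, γ)).2 +
      (leibnizator (extBracket Bg Bh l r ω) (0, α) (y, 0) (0, γ)).2 +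
      (leibnizator (extBracket Bg Bh l r ω) (0, α) (0, β) (z, 0)).2 +
      (leibnizator (extBracket Bg Bh l r ω) (0, α) (0, β) (0, γ)).2 := by
  simp only [leibnizator, extBracket, Prod.snd_sub, map_add, map_zero, LinearMap.add_apply,
    LinearMap.zero_apply, add_zero, zero_add]
  abel

theorem snd_leibnizator_extBracket_inl_inl_inl (x y z : g) :
    (leibnizator (extBracket Bg Bh l r ω) (x, 0) (y, 0) (z, 0)).2 =
      (l x (ω y z) - l y (ω x z) - r z (ω x y)) -
        (ω (Bg x y) z - ω x (Bg y z) + ω y (Bg x z)) := by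
  simp only [leibnizator, extBracket, Prod.snd_sub, map_zero, LinearMap.zero_apply, add_zero]
  abel

theorem snd_leibnizator_extBracket_inl_inl_inr (x y : g) (α : h) :
    (leibnizator (extBracket Bg Bh l r ω) (x, 0) (y, 0) (0, α)).2 =
      (l x (l y α) - l y (l x α) - l (Bg x y) α) - Bh (ω x y) α := by
  simp only [leibnizator, extBracket, Prod.snd_sub, map_zero, LinearMap.zero_apply,
    add_zero, zero_add]
  abel

theorem snd_leibnizator_extBracket_inl_inr_inl (x y : g) (α : h) :
    (leibnizator (extBracket Bg Bh l r ω) (x, 0) (0, α) (y, 0)).2 =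
      (l x (r y α) - r y (l x α) - r (Bg x y) α) - Bh α (ω x y) := by
  simp only [leibnizator, extBracket, Prod.snd_sub, map_zero, LinearMap.zero_apply,
    add_zero, zero_add]
  abel

theorem snd_leibnizator_extBracket_inr_inl_inl (x y : g) (α : h) :
    (leibnizator (extBracket Bg Bh l r ω) (0, α) (x, 0) (y, 0)).2 =
      -(leibnizator (extBracket Bg Bh l r ω) (x, 0) (0, α) (y, 0)).2 - r y (r x α + l x α) := by
  simp only [leibnizator, extBracket, Prod.snd_sub, map_add, map_zero, LinearMap.zero_apply,
    add_zero, zero_add]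
  abel

theorem snd_leibnizator_extBracket_inl_inr_inr (x : g) (α β : h) :
    (leibnizator (extBracket Bg Bh l r ω) (x, 0) (0, α) (0, β)).2 =
      l x (Bh α β) - (Bh (l x α) β + Bh α (l x β)) := by
  simp only [leibnizator, extBracket, Prod.snd_sub, map_zero, LinearMap.zero_apply,
    add_zero, zero_add]
  abel

theorem snd_leibnizator_extBracket_inr_inl_inr (x : g) (α β : h) :
    (leibnizator (extBracket Bg Bh l r ω) (0, α) (x, 0) (0, β)).2 =
      -(leibnizator (extBracket Bg Bh l r ω) (x, 0) (0, α) (0, β)).2 -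
        Bh (l x α + r x α) β := by
  simp only [leibnizator, extBracket, Prod.snd_sub, map_add, map_zero, LinearMap.add_apply,
    LinearMap.zero_apply, add_zero, zero_add]
  abel

theorem snd_leibnizator_extBracket_inr_inr_inl (x : g) (α β : h) :
    (leibnizator (extBracket Bg Bh l r ω) (0, α) (0, β) (x, 0)).2 =
      (Bh α (r x β) - Bh β (r x α)) - r x (Bh α β) := by
  simp only [leibnizator, extBracket, Prod.snd_sub, map_zero, LinearMap.zero_apply,
    add_zero, zero_add]
  abel

theorem snd_leibnizator_extBracket_inr_inr_inr (α β γ : h) :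
    (leibnizator (extBracket Bg Bh l r ω) (0, α) (0, β) (0, γ)).2 =
      leibnizator (Bh · ·) α β γ := by
  simp only [leibnizator, extBracket, Prod.snd_sub, map_zero, LinearMap.zero_apply,
    add_zero, zero_add]

end ExtBracket

/-- Proposition 2.6: the bracket `[·,·]_{(l,r,ω)}` on `g ⊕ h` satisfies the
Leibniz identity if and only if the seven conditions (2.9)–(2.15) hold. -/
theorem extension_bracket_leibniz_iff
    (Bg : g →ₗ[K] g →ₗ[K] g)
    (hg : ∀ x y z : g, Bg x (Bg y z) = Bg (Bg x y) z + Bg y (Bg x z))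
    (Bh : h →ₗ[K] h →ₗ[K] h)
    (hh : ∀ a b c : h, Bh a (Bh b c) = Bh (Bh a b) c + Bh b (Bh a c))
    (l r : g →ₗ[K] Module.End K h) (ω : g →ₗ[K] g →ₗ[K] h) :
    (∀ u v w : g × h,
        extBracket Bg Bh l r ω u (extBracket Bg Bh l r ω v w) =
          extBracket Bg Bh l r ω (extBracket Bg Bh l r ω u v) w +
            extBracket Bg Bh l r ω v (extBracket Bg Bh l r ω u w))
    ↔
    ((∀ (x : g) (α β : h), l x (Bh α β) = Bh (l x α) β + Bh α (l x β)) ∧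
     (∀ (x : g) (α β : h), r x (Bh α β) = Bh α (r x β) - Bh β (r x α)) ∧
     (∀ (x : g) (α β : h), Bh (l x α + r x α) β = 0) ∧
     (∀ (x y : g) (α : h),
        l x (l y α) - l y (l x α) - l (Bg x y) α = Bh (ω x y) α) ∧
     (∀ (x y : g) (α : h),
        l x (r y α) - r y (l x α) - r (Bg x y) α = Bh α (ω x y)) ∧
     (∀ (x y : g) (α : h), r y (r x α + l x α) = 0) ∧
     (∀ x y z : g,
        l x (ω y z) - l y (ω x z) - r z (ω x y) =
          ω (Bg x y) z - ω x (Bg y z) + ω y (Bg x z))) := by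
  simp only [← leibnizator_eq_zero_iff]
  constructor
  · intro H
    have hJ (u v w : g × h) : (leibnizator (extBracket Bg Bh l r ω) u v w).2 = 0 := by
      rw [H]; rfl
    refine ⟨fun x α β => ?_, fun x α β => ?_, fun x α β => ?_, fun x y α => ?_,
      fun x y α => ?_, fun x y α => ?_, fun x y z => ?_⟩
    · exact sub_eq_zero.mp ((snd_leibnizator_extBracket_inl_inr_inr x α β).symm.trans (hJ ..))
    · exact (sub_eq_zero.mp
        ((snd_leibnizator_extBracket_inr_inr_inl x α β).symm.trans (hJ ..))).symm
    · have key := (snd_leibnizator_extBracket_inr_inl_inr x α β).symm.trans (hJ ..)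
      rwa [hJ, neg_zero, zero_sub, neg_eq_zero] at key
    · exact sub_eq_zero.mp ((snd_leibnizator_extBracket_inl_inl_inr x y α).symm.trans (hJ ..))
    · exact sub_eq_zero.mp ((snd_leibnizator_extBracket_inl_inr_inl x y α).symm.trans (hJ ..))
    · have key := (snd_leibnizator_extBracket_inr_inl_inl x y α).symm.trans (hJ ..)
      rwa [hJ, neg_zero, zero_sub, neg_eq_zero] at key
    · exact sub_eq_zero.mp ((snd_leibnizator_extBracket_inl_inl_inl x y z).symm.trans (hJ ..))
  · rintro ⟨c1, c2, c3, c4, c5, c6, c7⟩ ⟨x, α⟩ ⟨y, β⟩ ⟨z, γ⟩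
    refine Prod.ext ?_ ?_
    · rw [fst_leibnizator_extBracket]
      exact leibnizator_eq_zero_iff.2 (hg x y z)
    rw [snd_leibnizator_extBracket_eq_sum, snd_leibnizator_extBracket_inr_inl_inl,
      snd_leibnizator_extBracket_inr_inl_inr]
    simp only [snd_leibnizator_extBracket_inl_inl_inl, snd_leibnizator_extBracket_inl_inl_inr,
      snd_leibnizator_extBracket_inl_inr_inl, snd_leibnizator_extBracket_inl_inr_inr,
      snd_leibnizator_extBracket_inr_inr_inl, snd_leibnizator_extBracket_inr_inr_inr,
      (leibnizator_eq_zero_iff (B := (Bh · ·))).2 (hh α β γ), c1, c2, c3, c4, c5, c6, c7,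
      sub_self, neg_zero, add_zero, Prod.snd_zero]
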